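/- arXiv:2506.12865 — 4 statements merged into one kernel-verified Lean document; each statement's English description precedes it below -/
import Mathlib

section
/- In the mod 2 cellular chain complex of the CW-complex structure on the space of trinitary algebras of codimension 4 in C^∞(S^1,ℝ), the first homology group H_1 is isomorphic to ℤ/2 and is generated by the class of the 1-cell Θ̄. -/
abbrev Ch (ι : Type) := ι → ZMod 2

/-- basis chain corresponding to a single cell -/
def ee {ι : Type} [DecidableEq ι] (i : ι) : Ch ι := Pi.single i 1

/-- the ℤ/2-linear boundary map determined by its values on cells -/
def mkBd {ι κ : Type} [Fintype ι] (d : ι → Ch κ) : Ch ι →ₗ[ZMod 2] Ch κ where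
  toFun f := ∑ i, f i • d i
  map_add' x y := by simp [add_smul, Finset.sum_add_distrib]
  map_smul' c x := by simp [Finset.smul_sum, smul_smul]

inductive Cells1
  | Yb1
  | Yb2
  | Ub1
  | Ub2
  | Zb
  | Thb
  | Nab
  deriving DecidableEq

instance : Fintype Cells1 :=
  Fintype.ofList [.Yb1, .Yb2, .Ub1, .Ub2, .Zb, .Thb, .Nab] (fun x => by cases x <;> simp)

inductive Cells2
  | Y1
  | Y2
  | U1
  | U2
  | Z
  | Th
  | Lb123
  | Lb231
  | Lb312
  | Lb132
  | Lb213
  | Lb321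
  | Mb1
  | Mb2
  | Mb3
  | Nb1
  | Nb2
  | Nb3
  | Pb1
  | Pb2
  | Sb1
  | Sb2
  | Xbp
  | Xbm
  | Vb1p
  | Vb2p
  | Vb1m
  | Vb2m
  | Omb
  deriving DecidableEq

instance : Fintype Cells2 :=
  Fintype.ofList [.Y1, .Y2, .U1, .U2, .Z, .Th, .Lb123, .Lb231, .Lb312, .Lb132, .Lb213, .Lb321, .Mb1, .Mb2, .Mb3, .Nb1, .Nb2, .Nb3, .Pb1, .Pb2, .Sb1, .Sb2, .Xbp, .Xbm, .Vb1p, .Vb2p, .Vb1m, .Vb2m, .Omb] (fun x => by cases x <;> simp)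

/-- boundary values on cells -/
def d2 : Cells2 → Ch Cells1
  | .Y1 => ee Cells1.Nab + ee Cells1.Yb1 + ee Cells1.Yb2
  | .Y2 => ee Cells1.Nab + ee Cells1.Yb2 + ee Cells1.Yb1
  | .U1 => ee Cells1.Nab + ee Cells1.Ub1 + ee Cells1.Ub2
  | .U2 => ee Cells1.Nab + ee Cells1.Ub2 + ee Cells1.Ub1
  | .Z => ee Cells1.Nab
  | .Th => 0
  | .Lb123 => ee Cells1.Ub1 + ee Cells1.Zb + ee Cells1.Yb2
  | .Lb231 => ee Cells1.Yb1 + ee Cells1.Ub2 + ee Cells1.Zb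
  | .Lb312 => ee Cells1.Zb + ee Cells1.Yb2 + ee Cells1.Ub2
  | .Lb132 => ee Cells1.Yb1 + ee Cells1.Zb + ee Cells1.Ub2
  | .Lb213 => ee Cells1.Ub1 + ee Cells1.Yb2 + ee Cells1.Zb
  | .Lb321 => ee Cells1.Zb + ee Cells1.Ub2 + ee Cells1.Yb2
  | .Mb1 => ee Cells1.Ub1 + ee Cells1.Yb1 + ee Cells1.Ub2
  | .Mb2 => ee Cells1.Ub1 + ee Cells1.Ub2 + ee Cells1.Yb1
  | .Mb3 => ee Cells1.Yb2
  | .Nb1 => ee Cells1.Yb1 + ee Cells1.Ub2 + ee Cells1.Yb2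
  | .Nb2 => ee Cells1.Yb1 + ee Cells1.Yb2 + ee Cells1.Ub2
  | .Nb3 => ee Cells1.Ub1
  | .Pb1 => 0
  | .Pb2 => 0
  | .Sb1 => 0
  | .Sb2 => 0
  | .Xbp => ee Cells1.Yb1 + ee Cells1.Yb2
  | .Xbm => ee Cells1.Yb1 + ee Cells1.Yb2
  | .Vb1p => ee Cells1.Yb1 + ee Cells1.Ub1
  | .Vb2p => ee Cells1.Yb2 + ee Cells1.Ub2
  | .Vb1m => ee Cells1.Yb1 + ee Cells1.Ub1
  | .Vb2m => ee Cells1.Yb2 + ee Cells1.Ub2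
  | .Omb => 0

/-- the boundary operator -/
def bd2 : Ch Cells2 →ₗ[ZMod 2] Ch Cells1 := mkBd d2

/-!
Since `∂₁ = 0`, `H₁ = C₁ / im ∂₂`. No 2-cell has Θ̄ in its boundary, whereas each of the other
six 1-cells is a boundary (`Ȳ₂ = ∂M̄₃`, `Ū₁ = ∂N̄₃`, `∇ = ∂Z`, and the rest follow). Hence `im ∂₂`
is the kernel of the Θ̄-coefficient `C₁ → ℤ/2`, which induces `H₁ ≅ ℤ/2` sending `[Θ̄]` to `1`.
-/

lemma mkBd_apply_eq_zero {ι κ : Type} [Fintype ι] {d : ι → Ch κ} {j : κ}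
    (hj : ∀ i, d i j = 0) (f : Ch ι) : mkBd d f j = 0 := by
  simp [mkBd, Finset.sum_apply, hj]

lemma range_mkBd_eq_ker_proj {ι κ : Type} [Fintype ι] [Fintype κ] [DecidableEq κ]
    {d : ι → Ch κ} {j : κ} (hj : ∀ i, d i j = 0)
    (hbd : ∀ k, k ≠ j → ee k ∈ LinearMap.range (mkBd d)) :
    LinearMap.range (mkBd d) = LinearMap.ker (LinearMap.proj j) := by
  apply le_antisymm
  · rintro _ ⟨f, rfl⟩
    exact mkBd_apply_eq_zero hj f
  · intro f (hf : f j = 0)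
    rw [← Finset.univ_sum_single f]
    refine Submodule.sum_mem _ fun k _ => ?_
    by_cases hk : k = j
    · simp [hk, hf]
    · convert Submodule.smul_mem _ (f k) (hbd k hk) using 1
      ext i
      simp [ee, Pi.single_apply]

lemma span_mk_eq_top_of_apply_eq_one {R M : Type*} [Ring R] [AddCommGroup M] [Module R M]
    (φ : M →ₗ[R] R) {x : M} (hx : φ x = 1) :
    Submodule.span R {(Submodule.Quotient.mk x : M ⧸ LinearMap.ker φ)} = ⊤ := by
  refine eq_top_iff.2 fun y _ => ?_
  obtain ⟨y, rfl⟩ := Submodule.Quotient.mk_surjective _ y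
  refine Submodule.mem_span_singleton.2 ⟨φ y, ?_⟩
  rw [← Submodule.Quotient.mk_smul, Submodule.Quotient.eq]
  simp [hx]

lemma d2_apply_Thb : ∀ i, d2 i Cells1.Thb = 0 := by decide

lemma ee_mem_range_bd2 : ∀ k, k ≠ Cells1.Thb → ee k ∈ LinearMap.range bd2
  | .Yb1, _ => ⟨ee .Xbp + ee .Mb3, by decide⟩
  | .Yb2, _ => ⟨ee .Mb3, by decide⟩
  | .Ub1, _ => ⟨ee .Nb3, by decide⟩
  | .Ub2, _ => ⟨ee .Vb2p + ee .Mb3, by decide⟩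
  | .Zb, _ => ⟨ee .Lb123 + ee .Nb3 + ee .Mb3, by decide⟩
  | .Nab, _ => ⟨ee .Z, by decide⟩
  | .Thb, h => absurd rfl h

lemma range_bd2 : LinearMap.range bd2 = LinearMap.ker (LinearMap.proj Cells1.Thb) :=
  range_mkBd_eq_ker_proj d2_apply_Thb ee_mem_range_bd2

/-- H₁ of the mod 2 cellular chain complex of `\overline{TD}_2(S¹)` is ℤ/2,
generated by the class of the 1-cell Θ̄.  (∂₁ = 0, so H₁ = C₁ / im ∂₂.) -/
theorem H1_of_TD2_is_Z2 :
    Nonempty ((Ch Cells1 ⧸ LinearMap.range bd2) ≃ₗ[ZMod 2] ZMod 2) ∧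
    Submodule.span (ZMod 2)
      {(Submodule.Quotient.mk (ee Cells1.Thb) :
          Ch Cells1 ⧸ LinearMap.range bd2)} = ⊤ := by
  rw [range_bd2]
  refine ⟨⟨LinearMap.quotKerEquivOfSurjective _ fun c => ⟨fun _ => c, rfl⟩⟩, ?_⟩
  refine span_mk_eq_top_of_apply_eq_one _ ?_
  simp [ee]
end

section
/- For the ℤ/2 cellular chain complex with boundary maps ∂₆: C_6 → C_5 and ∂₅: C_5 → C_4 as specified in the paper, one has ∂₅ ∘ ∂₆ = 0. -/
inductive Cells4
  | F1
  | F2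
  | F3
  | F4
  | G1234
  | G1243
  | G1324
  | G1342
  | G1423
  | G1432
  | G2134
  | G2143
  | G2341
  | G2431
  | G3142
  | G3241
  | H1
  | H2
  | H3
  | H4
  | I1
  | I2
  | I3
  | J123p
  | J123m
  | J132p
  | J132m
  | J213p
  | J213m
  | J231p
  | J231m
  | J312p
  | J312m
  | J321p
  | J321m
  | K1p
  | K1m
  | K2p
  | K2m
  | K3p
  | K3m
  | W1p
  | W1m
  | W2p
  | W2m
  | Bb
  | Cb12
  | Cb13
  | Cb14
  | Cb15
  | Cb21
  | Cb23
  | Cb24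
  | Cb25
  | Cb31
  | Cb32
  | Cb34
  | Cb35
  | Cb41
  | Cb42
  | Cb43
  | Cb45
  | Cb51
  | Cb52
  | Cb53
  | Cb54
  | Db12p
  | Db12m
  | Db13p
  | Db13m
  | Db14p
  | Db14m
  | Db23p
  | Db23m
  | Db24p
  | Db24m
  | Db34p
  | Db34m
  | Ebp
  | Eb1
  | Eb2
  | Eb3
  deriving DecidableEq

instance : Fintype Cells4 := Fintype.ofList [.F1, .F2, .F3, .F4, .G1234, .G1243, .G1324, .G1342, .G1423, .G1432, .G2134, .G2143, .G2341, .G2431, .G3142, .G3241, .H1, .H2, .H3, .H4, .I1, .I2, .I3, .J123p, .J123m, .J132p, .J132m, .J213p, .J213m, .J231p, .J231m, .J312p, .J312m, .J321p, .J321m, .K1p, .K1m, .K2p, .K2m, .K3p, .K3m, .W1p, .W1m, .W2p, .W2m, .Bb, .Cb12, .Cb13, .Cb14, .Cb15, .Cb21, .Cb23, .Cb24, .Cb25, .Cb31, .Cb32, .Cb34, .Cb35, .Cb41, .Cb42, .Cb43, .Cb45, .Cb51, .Cb52, .Cb53, .Cb54, .Db12p, .Db12m, .Db13p, .Db13m,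 .Db14p, .Db14m, .Db23p, .Db23m, .Db24p, .Db24m, .Db34p, .Db34m, .Ebp, .Eb1, .Eb2, .Eb3] (by intro x; cases x <;> decide)

inductive Cells5
  | B
  | C12
  | C13
  | C14
  | C15
  | C21
  | C23
  | C24
  | C25
  | C31
  | C32
  | C34
  | C35
  | C41
  | C42
  | C43
  | C45
  | C51
  | C52
  | C53
  | C54
  | D12p
  | D12m
  | D13p
  | D13m
  | D14p
  | D14m
  | D23p
  | D23m
  | D24p
  | D24m
  | D34p
  | D34m
  | Ep
  | E1
  | E2
  | E3
  | Ab23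
  | Ab24
  | Ab25
  | Ab26
  | Ab34
  | Ab35
  | Ab36
  | Ab45
  | Ab46
  | Ab56
  deriving DecidableEq

instance : Fintype Cells5 := Fintype.ofList [.B, .C12, .C13, .C14, .C15, .C21, .C23, .C24, .C25, .C31, .C32, .C34, .C35, .C41, .C42, .C43, .C45, .C51, .C52, .C53, .C54, .D12p, .D12m, .D13p, .D13m, .D14p, .D14m, .D23p, .D23m, .D24p, .D24m, .D34p, .D34m, .Ep, .E1, .E2, .E3, .Ab23, .Ab24, .Ab25, .Ab26, .Ab34, .Ab35, .Ab36, .Ab45, .Ab46, .Ab56] (by intro x; cases x <;> decide)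

/-- boundary values on cells -/
def d5 : Cells5 → Ch Cells4
  | .B => ee Cells4.H1 + ee Cells4.H2 + ee Cells4.H3 + ee Cells4.H4
  | .C12 => ee Cells4.F1 + ee Cells4.H1 + ee Cells4.G1234 + ee Cells4.G1243 + ee Cells4.Cb12 + ee Cells4.Cb51
  | .C13 => ee Cells4.H1 + ee Cells4.J123p + ee Cells4.G1342 + ee Cells4.Cb13 + ee Cells4.Cb52
  | .C14 => ee Cells4.H1 + ee Cells4.G1324 + ee Cells4.J123m + ee Cells4.J132p + ee Cells4.Cb14 + ee Cells4.Cb53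
  | .C15 => ee Cells4.G1423 + ee Cells4.G1432 + ee Cells4.J132m + ee Cells4.Cb15 + ee Cells4.Cb54
  | .C21 => ee Cells4.F1 + ee Cells4.H2 + ee Cells4.G2134 + ee Cells4.G2143 + ee Cells4.Cb21 + ee Cells4.Cb15
  | .C23 => ee Cells4.H1 + ee Cells4.F2 + ee Cells4.H2 + ee Cells4.G2341 + ee Cells4.J123p + ee Cells4.Cb23 + ee Cells4.Cb12
  | .C24 => ee Cells4.H1 + ee Cells4.H2 + ee Cells4.J123m + ee Cells4.J132p + ee Cells4.J231p + ee Cells4.I1 + ee Cells4.W1p + ee Cells4.Cb24 + ee Cells4.Cb13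
  | .C25 => ee Cells4.H1 + ee Cells4.G2431 + ee Cells4.J132m + ee Cells4.J231m + ee Cells4.I1 + ee Cells4.W1m + ee Cells4.Cb25 + ee Cells4.Cb14
  | .C31 => ee Cells4.H3 + ee Cells4.G3142 + ee Cells4.J213p + ee Cells4.I2 + ee Cells4.Cb31 + ee Cells4.Cb25
  | .C32 => ee Cells4.H2 + ee Cells4.F2 + ee Cells4.H3 + ee Cells4.G3241 + ee Cells4.J213m + ee Cells4.Cb32 + ee Cells4.Cb21
  | .C34 => ee Cells4.G1423 + ee Cells4.H2 + ee Cells4.F3 + ee Cells4.H3 + ee Cells4.J231p + ee Cells4.Cb34 + ee Cells4.Cb23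
  | .C35 => ee Cells4.G1324 + ee Cells4.H2 + ee Cells4.I2 + ee Cells4.J231m + ee Cells4.Cb35 + ee Cells4.Cb24
  | .C41 => ee Cells4.G2431 + ee Cells4.H4 + ee Cells4.J213p + ee Cells4.J312p + ee Cells4.I3 + ee Cells4.W2p + ee Cells4.Cb41 + ee Cells4.Cb35
  | .C42 => ee Cells4.H3 + ee Cells4.H4 + ee Cells4.J213m + ee Cells4.J312m + ee Cells4.J321p + ee Cells4.I3 + ee Cells4.W2m + ee Cells4.Cb42 + ee Cells4.Cb31
  | .C43 => ee Cells4.G1432 + ee Cells4.H3 + ee Cells4.F3 + ee Cells4.H4 + ee Cells4.J321m + ee Cells4.Cb43 + ee Cells4.Cb32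
  | .C45 => ee Cells4.G1234 + ee Cells4.G2134 + ee Cells4.H3 + ee Cells4.F4 + ee Cells4.Cb45 + ee Cells4.Cb34
  | .C51 => ee Cells4.G2341 + ee Cells4.G3241 + ee Cells4.J312p + ee Cells4.Cb51 + ee Cells4.Cb45
  | .C52 => ee Cells4.H4 + ee Cells4.G3142 + ee Cells4.J312m + ee Cells4.J321p + ee Cells4.Cb52 + ee Cells4.Cb41
  | .C53 => ee Cells4.G1342 + ee Cells4.H4 + ee Cells4.J321m + ee Cells4.Cb53 + ee Cells4.Cb42
  | .C54 => ee Cells4.G1243 + ee Cells4.G2143 + ee Cells4.H4 + ee Cells4.F4 + ee Cells4.Cb54 + ee Cells4.Cb43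
  | .D12p => ee Cells4.J213m + ee Cells4.K3p + ee Cells4.H1 + ee Cells4.H2 + ee Cells4.Db12p + ee Cells4.Db14p
  | .D12m => ee Cells4.I1 + ee Cells4.J213p + ee Cells4.K3m + ee Cells4.H1 + ee Cells4.H2 + ee Cells4.Db12m + ee Cells4.Db14m
  | .D13p => ee Cells4.J123m + ee Cells4.J213p + ee Cells4.J312m + ee Cells4.H1 + ee Cells4.H3 + ee Cells4.Db13p + ee Cells4.Db24p
  | .D13m => ee Cells4.J123p + ee Cells4.J213m + ee Cells4.J312p + ee Cells4.H1 + ee Cells4.H3 + ee Cells4.Db13m + ee Cells4.Db24m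
  | .D14p => ee Cells4.J132m + ee Cells4.K2p + ee Cells4.J312p + ee Cells4.H1 + ee Cells4.H4 + ee Cells4.Db14p + ee Cells4.Db34p
  | .D14m => ee Cells4.J132p + ee Cells4.K2m + ee Cells4.J312m + ee Cells4.H1 + ee Cells4.H4 + ee Cells4.Db14m + ee Cells4.Db34m
  | .D23p => ee Cells4.J123p + ee Cells4.J321m + ee Cells4.H2 + ee Cells4.H3 + ee Cells4.Db23p + ee Cells4.Db12p
  | .D23m => ee Cells4.J123m + ee Cells4.I2 + ee Cells4.J321p + ee Cells4.H2 + ee Cells4.H3 + ee Cells4.Db23m + ee Cells4.Db12m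
  | .D24p => ee Cells4.J132p + ee Cells4.J231m + ee Cells4.J321p + ee Cells4.H2 + ee Cells4.H4 + ee Cells4.Db24p + ee Cells4.Db13p
  | .D24m => ee Cells4.J132m + ee Cells4.J231p + ee Cells4.J321m + ee Cells4.H2 + ee Cells4.H4 + ee Cells4.Db24m + ee Cells4.Db13m
  | .D34p => ee Cells4.K1p + ee Cells4.J231p + ee Cells4.H3 + ee Cells4.H4 + ee Cells4.Db34p + ee Cells4.Db23p
  | .D34m => ee Cells4.K1m + ee Cells4.J231m + ee Cells4.H3 + ee Cells4.H4 + ee Cells4.I3 + ee Cells4.Db34m + ee Cells4.Db23m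
  | .Ep => ee Cells4.K1p + ee Cells4.K2p + ee Cells4.K3p
  | .E1 => ee Cells4.K1p + ee Cells4.K2m + ee Cells4.K3m + ee Cells4.W1p + ee Cells4.Eb1 + ee Cells4.Eb3
  | .E2 => ee Cells4.K1m + ee Cells4.K2p + ee Cells4.K3m + ee Cells4.W1m + ee Cells4.W2p + ee Cells4.Eb2 + ee Cells4.Eb1
  | .E3 => ee Cells4.K1m + ee Cells4.K2m + ee Cells4.K3p + ee Cells4.W2m + ee Cells4.Eb3 + ee Cells4.Eb2
  | .Ab23 => ee Cells4.Cb12 + ee Cells4.Cb21 + ee Cells4.Cb45 + ee Cells4.Cb54 + ee Cells4.Db24m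
  | .Ab24 => ee Cells4.Cb13 + ee Cells4.Cb53 + ee Cells4.Db23p + ee Cells4.Db14m + ee Cells4.Db24p + ee Cells4.Db34m + ee Cells4.Eb3
  | .Ab25 => ee Cells4.Cb14 + ee Cells4.Cb35 + ee Cells4.Db23m + ee Cells4.Db24p + ee Cells4.Db14m + ee Cells4.Db34p + ee Cells4.Eb1
  | .Ab26 => ee Cells4.Cb15 + ee Cells4.Cb34 + ee Cells4.Cb43 + ee Cells4.Db24m + ee Cells4.Cb51
  | .Ab34 => ee Cells4.Cb31 + ee Cells4.Cb52 + ee Cells4.Db13p + ee Cells4.Db14p + ee Cells4.Db23m + ee Cells4.Db34m + ee Cells4.Eb2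
  | .Ab35 => ee Cells4.Db12p + ee Cells4.Db13m + ee Cells4.Db23p
  | .Ab36 => ee Cells4.Cb42 + ee Cells4.Db12p + ee Cells4.Db14m + ee Cells4.Db24p + ee Cells4.Db34m + ee Cells4.Eb3 + ee Cells4.Cb52
  | .Ab45 => ee Cells4.Cb25 + ee Cells4.Cb41 + ee Cells4.Db12m + ee Cells4.Db14p + ee Cells4.Db34m + ee Cells4.Eb2 + ee Cells4.Db24p
  | .Ab46 => ee Cells4.Cb24 + ee Cells4.Db12m + ee Cells4.Db13p + ee Cells4.Db14m + ee Cells4.Db34p + ee Cells4.Eb1 + ee Cells4.Cb53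
  | .Ab56 => ee Cells4.Cb23 + ee Cells4.Cb32 + ee Cells4.Cb51 + ee Cells4.Db13m + ee Cells4.Cb54

/-- the boundary operator -/
def bd5 : Ch Cells5 →ₗ[ZMod 2] Ch Cells4 := mkBd d5

inductive Cells6
  | A23
  | A24
  | A25
  | A26
  | A34
  | A35
  | A36
  | A45
  | A46
  | A56
  deriving DecidableEq

instance : Fintype Cells6 := Fintype.ofList [.A23, .A24, .A25, .A26, .A34, .A35, .A36, .A45, .A46, .A56] (by intro x; cases x <;> decide)

/-- boundary values on cells -/
def d6 : Cells6 → Ch Cells5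
  | .A23 => ee Cells5.C12 + ee Cells5.C21 + ee Cells5.B + ee Cells5.C45 + ee Cells5.C54 + ee Cells5.Ab23 + ee Cells5.Ab26
  | .A24 => ee Cells5.C13 + ee Cells5.B + ee Cells5.C53 + ee Cells5.D23p + ee Cells5.Ab24 + ee Cells5.Ab36
  | .A25 => ee Cells5.C14 + ee Cells5.B + ee Cells5.C35 + ee Cells5.D23m + ee Cells5.D24p + ee Cells5.Ab25 + ee Cells5.Ab46
  | .A26 => ee Cells5.C15 + ee Cells5.C34 + ee Cells5.C43 + ee Cells5.D24m + ee Cells5.Ab26 + ee Cells5.Ab56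
  | .A34 => ee Cells5.B + ee Cells5.C31 + ee Cells5.C52 + ee Cells5.D13p + ee Cells5.D23m + ee Cells5.Ab34 + ee Cells5.Ab45
  | .A35 => ee Cells5.B + ee Cells5.D12p + ee Cells5.D13m + ee Cells5.D14p + ee Cells5.D23p + ee Cells5.D24m + ee Cells5.D34p + ee Cells5.Ep
  | .A36 => ee Cells5.C42 + ee Cells5.D12p + ee Cells5.D14m + ee Cells5.D24p + ee Cells5.D34m + ee Cells5.E3 + ee Cells5.Ab36 + ee Cells5.Ab34
  | .A45 => ee Cells5.B + ee Cells5.C25 + ee Cells5.C41 + ee Cells5.D12m + ee Cells5.D14p + ee Cells5.D34m + ee Cells5.E2 + ee Cells5.Ab45 + ee Cells5.Ab25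
  | .A46 => ee Cells5.C24 + ee Cells5.D12m + ee Cells5.D13p + ee Cells5.D14m + ee Cells5.D34p + ee Cells5.E1 + ee Cells5.Ab46 + ee Cells5.Ab24
  | .A56 => ee Cells5.C23 + ee Cells5.C32 + ee Cells5.C51 + ee Cells5.D13m + ee Cells5.Ab56 + ee Cells5.Ab23

/-- the boundary operator -/
def bd6 : Ch Cells6 →ₗ[ZMod 2] Ch Cells5 := mkBd d6

/-!
Over `ℤ/2` a linear map out of `Ch ι` is determined by its values on the cells, so it suffices to
check `∂₅ (∂₆ A) = 0` for each of the ten 6-cells `A`; in each case every 4-cell occurs an even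
number of times among the boundaries of the 5-cells of `∂₆ A`.
-/

lemma mkBd_ee {ι κ : Type} [Fintype ι] [DecidableEq ι] (d : ι → Ch κ) (i : ι) :
    mkBd d (ee i) = d i := by
  change ∑ k, ee i k • d k = d i
  rw [Finset.sum_eq_single i (fun k _ hk => by simp [ee, hk]) (by simp)]
  simp [ee]

lemma comp_mkBd_eq_zero_iff {ι κ M : Type} [Fintype ι] [AddCommGroup M] [Module (ZMod 2) M]
    (g : Ch κ →ₗ[ZMod 2] M) (d : ι → Ch κ) : g ∘ₗ mkBd d = 0 ↔ ∀ i, g (d i) = 0 := by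
  classical
  have comp_ee (i : ι) : (g ∘ₗ mkBd d) (ee i) = g (d i) := by
    rw [LinearMap.comp_apply, mkBd_ee]
  refine ⟨fun h i => by rw [← comp_ee, h, LinearMap.zero_apply], fun h => ?_⟩
  refine (Pi.basisFun (ZMod 2) ι).ext fun i => ?_
  rw [Pi.basisFun_apply, ← ee, comp_ee, h, LinearMap.zero_apply]

lemma bd5_d6_eq_zero (A : Cells6) : bd5 (d6 A) = 0 := by
  cases A <;> simp only [d6, bd5, map_add, mkBd_ee] <;> decide

/-- ∂₅ ∘ ∂₆ = 0 for the mod 2 cellular chain complex of `\overline{TD}_2(S¹)`. -/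
theorem bd5_comp_bd6 : bd5 ∘ₗ bd6 = 0 :=
  (comp_mkBd_eq_zero_iff bd5 d6).2 bd5_d6_eq_zero
end

section
/- The third symmetric power Sym³(S¹) = (S¹)³/S₃ of the circle is homotopy equivalent to S¹. -/
/-- the setoid on (S¹)³ identifying triples up to permutation of coordinates -/
def sym3Setoid : Setoid (Fin 3 → Circle) where
  r f g := ∃ σ : Equiv.Perm (Fin 3), f ∘ σ = g
  iseqv := by
    refine ⟨fun f => ⟨1, ?_⟩, fun {f g} ⟨σ, h⟩ => ⟨σ⁻¹, ?_⟩,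
      fun {f g h} ⟨σ, h1⟩ ⟨τ, h2⟩ => ⟨σ * τ, ?_⟩⟩
    · ext x; simp
    · subst h; ext x; simp
    · subst h1; subst h2; ext x; simp

/-- Sym³(S¹) = (S¹)³/S₃ with the quotient topology -/
def Sym3Circle : Type := Quotient sym3Setoid

noncomputable instance : TopologicalSpace Sym3Circle := instTopologicalSpaceQuotient

/-!
Let `prod : Sym³(S¹) → S¹` multiply the three points and let `cubeRoots : S¹ → Sym³(S¹)` send `w`
to its three cube roots, so that `prod ∘ cubeRoots = id`. To deform the identity into
`cubeRoots ∘ prod`, lift a point to sorted angles `x₀ ≤ x₁ ≤ x₂` in `[-π, π]` and move them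
linearly to the equispaced triple with the same mean. A power of
`(x₀, x₁, x₂) ↦ (x₁, x₂, x₀ + 2π)` carries every such lift to the unique sorted lift in `(-π, π]`,
and straightening commutes with this map, so the homotopy does not depend on the lift. It is
continuous because the sorted lifts form a compact set and `Sym³(S¹)` is Hausdorff, so lifting is
a quotient map.
-/

open Real Topology

def permSetoid (ι X : Type*) : Setoid (ι → X) where
  r f g := ∃ σ : Equiv.Perm ι, f ∘ σ = g
  iseqv.refl _ := ⟨1, rfl⟩
  iseqv.symm := fun ⟨σ, h⟩ => ⟨σ⁻¹, by subst h; ext; simp⟩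
  iseqv.trans := fun ⟨σ, h1⟩ ⟨τ, h2⟩ => ⟨σ * τ, by subst h1 h2; rfl⟩

namespace permSetoid

variable {ι X : Type*}

theorem mk_comp_perm (f : ι → X) (σ : Equiv.Perm ι) :
    Quotient.mk (permSetoid ι X) (f ∘ σ) = Quotient.mk _ f :=
  (Quotient.sound (show (permSetoid ι X).r f (f ∘ σ) from ⟨σ, rfl⟩)).symm

variable [TopologicalSpace X]

theorem isOpenQuotientMap_mk [Finite ι] : IsOpenQuotientMap (Quotient.mk (permSetoid ι X)) := by
  refine ⟨Quotient.mk_surjective, continuous_quotient_mk', fun U hU => ?_⟩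
  have hsat : Quotient.mk (permSetoid ι X) ⁻¹' (Quotient.mk _ '' U) =
      ⋃ σ : Equiv.Perm ι, (· ∘ σ) ⁻¹' U := by
    ext g
    simp only [Set.mem_preimage, Set.mem_image, Set.mem_iUnion]
    constructor
    · rintro ⟨f, hf, hfg⟩
      obtain ⟨σ, rfl⟩ := Quotient.exact hfg
      exact ⟨σ⁻¹, by simpa [Function.comp_assoc] using hf⟩
    · rintro ⟨σ, hσ⟩
      exact ⟨g ∘ σ, hσ, mk_comp_perm g σ⟩
  show IsOpen (Quotient.mk (permSetoid ι X) ⁻¹' _)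
  rw [hsat]
  exact isOpen_iUnion fun σ => hU.preimage (continuous_pi fun i => continuous_apply (σ i))

instance [Finite ι] [T2Space X] : T2Space (Quotient (permSetoid ι X)) := by
  rw [t2Space_iff_of_isOpenQuotientMap isOpenQuotientMap_mk]
  have hrel :
      {q : (ι → X) × (ι → X) | Quotient.mk (permSetoid ι X) q.1 = Quotient.mk _ q.2} =
        ⋃ σ : Equiv.Perm ι, {q | q.1 ∘ σ = q.2} := by
    ext q
    simp only [Set.mem_ofPred_eq, Set.mem_iUnion, Quotient.eq]
    rfl
  rw [hrel]
  exact isClosed_iUnion_of_finite fun σ =>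
    isClosed_eq (continuous_pi fun i => (continuous_apply (σ i)).comp continuous_fst)
      continuous_snd

def prod [Fintype ι] (M : Type*) [CommMonoid M] [TopologicalSpace M] [ContinuousMul M] :
    C(Quotient (permSetoid ι M), M) where
  toFun := Quotient.lift (fun f => ∏ i, f i) fun f _ ⟨σ, hσ⟩ =>
    hσ ▸ (Equiv.prod_comp σ f).symm
  continuous_toFun :=
    continuous_quot_lift _ (continuous_finsetProd _ fun i _ => continuous_apply i)

end permSetoid

-- `sym3Setoid` is `permSetoid (Fin 3) Circle` up to unfolding.
instance : T2Space Sym3Circle :=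
  inferInstanceAs (T2Space (Quotient (permSetoid (Fin 3) Circle)))

namespace Sym3Circle

noncomputable section

def ofAngles (x : Fin 3 → ℝ) : Sym3Circle := Quotient.mk _ fun i => Circle.exp (x i)

theorem continuous_ofAngles : Continuous ofAngles :=
  continuous_quotient_mk'.comp <|
    continuous_pi fun i => Circle.exp.continuous.comp (continuous_apply i)

def rotate (x : Fin 3 → ℝ) : Fin 3 → ℝ := ![x 1, x 2, x 0 + 2 * π]

theorem ofAngles_rotate (x : Fin 3 → ℝ) : ofAngles (rotate x) = ofAngles x := by
  have h : (fun i => Circle.exp (rotate x i)) =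
      (fun i => Circle.exp (x i)) ∘ (Equiv.swap 0 1 * Equiv.swap 1 2 : Equiv.Perm (Fin 3)) := by
    funext i
    fin_cases i <;> simp [rotate, Equiv.swap_apply_def]
  exact (congrArg (Quotient.mk _) h).trans (permSetoid.mk_comp_perm _ _)

theorem ofAngles_rotate_iterate (x : Fin 3 → ℝ) (j : ℕ) :
    ofAngles (rotate^[j] x) = ofAngles x :=
  congrFun (Function.iterate_invariant (f := rotate) (g := ofAngles) (funext ofAngles_rotate) j) x

def mean (x : Fin 3 → ℝ) : ℝ := (x 0 + x 1 + x 2) / 3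

def equispaced (m : ℝ) : Fin 3 → ℝ := ![m - 2 * π / 3, m, m + 2 * π / 3]

theorem equispaced_add (m : ℝ) : equispaced (m + 2 * π / 3) = rotate (equispaced m) := by
  ext i; fin_cases i <;> simp [equispaced, rotate]; ring

theorem continuous_equispaced : Continuous equispaced :=
  continuous_pi fun i => by fin_cases i <;> simp [equispaced] <;> fun_prop

theorem mean_equispaced (m : ℝ) : mean (equispaced m) = m := by
  simp [mean, equispaced]; ring

def straighten (t : ℝ) (x : Fin 3 → ℝ) : Fin 3 → ℝ :=
  fun i => (1 - t) * x i + t * equispaced (mean x) i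

theorem straighten_zero (x : Fin 3 → ℝ) : straighten 0 x = x := by
  ext i; simp [straighten]

theorem straighten_one (x : Fin 3 → ℝ) : straighten 1 x = equispaced (mean x) := by
  ext i; simp [straighten]

theorem straighten_rotate (t : ℝ) (x : Fin 3 → ℝ) :
    straighten t (rotate x) = rotate (straighten t x) := by
  ext i
  fin_cases i
  all_goals simp only [straighten, rotate, equispaced, mean, Fin.zero_eta, Fin.mk_one,
    Fin.reduceFinMk, Matrix.cons_val]
  all_goals ring

theorem straighten_rotate_iterate (t : ℝ) (x : Fin 3 → ℝ) (j : ℕ) :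
    straighten t (rotate^[j] x) = rotate^[j] (straighten t x) :=
  (Function.Commute.iterate_left (fun x => (straighten_rotate t x).symm) j x).symm

theorem continuous_straighten :
    Continuous fun p : ℝ × (Fin 3 → ℝ) => straighten p.1 p.2 := by
  unfold straighten equispaced mean
  refine continuous_pi fun i => ?_
  fin_cases i <;> simp <;> fun_prop

def sortedIn (s : Set ℝ) : Set (Fin 3 → ℝ) := {x | Monotone x} ∩ Set.univ.pi fun _ => s

theorem monotone_fin_three {α : Type*} [Preorder α] {x : Fin 3 → α} :
    Monotone x ↔ x 0 ≤ x 1 ∧ x 1 ≤ x 2 := by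
  simp [Fin.monotone_iff_le_succ, Fin.forall_fin_two]

theorem mem_sortedIn {s : Set ℝ} {x : Fin 3 → ℝ} :
    x ∈ sortedIn s ↔ x 0 ≤ x 1 ∧ x 1 ≤ x 2 ∧ x 0 ∈ s ∧ x 1 ∈ s ∧ x 2 ∈ s := by
  simp [sortedIn, monotone_fin_three, Fin.forall_fin_succ, and_assoc]

theorem isCompact_sortedIn_Icc (a b : ℝ) : IsCompact (sortedIn (Set.Icc a b)) :=
  (isCompact_univ_pi fun _ => isCompact_Icc).of_isClosed_subset
    (isClosed_monotone.inter (isClosed_set_pi fun _ _ => isClosed_Icc)) Set.inter_subset_right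

theorem exists_ofAngles_mem_sortedIn_Ioc (v : Fin 3 → Circle) :
    ∃ x ∈ sortedIn (Set.Ioc (-π) π), ofAngles x = Quotient.mk _ v := by
  set a : Fin 3 → ℝ := fun i => Complex.arg (v i)
  refine ⟨a ∘ Tuple.sort a, ⟨Tuple.monotone_sort a, fun i _ =>
    ⟨Complex.neg_pi_lt_arg _, Complex.arg_le_pi _⟩⟩, ?_⟩
  exact (congrArg (Quotient.mk _) (funext fun i => Circle.exp_arg _)).trans
    (permSetoid.mk_comp_perm v _)

theorem exists_rotate_iterate_mem_sortedIn_Ioc {x : Fin 3 → ℝ}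
    (hx : x ∈ sortedIn (Set.Icc (-π) π)) :
    ∃ j, rotate^[j] x ∈ sortedIn (Set.Ioc (-π) π) := by
  obtain ⟨h01, h12, ⟨h0, -⟩, ⟨-, h1⟩, ⟨-, h2⟩⟩ := mem_sortedIn.1 hx
  have := Real.pi_pos
  rcases h0.lt_or_eq with h0 | h0
  · refine ⟨0, mem_sortedIn.2 ?_⟩
    simp only [Function.iterate_zero_apply, Set.mem_Ioc]
    refine ⟨?_, ?_, ⟨?_, ?_⟩, ⟨?_, ?_⟩, ⟨?_, ?_⟩⟩ <;> linarith
  rcases h01.lt_or_eq with h01 | h01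
  · refine ⟨1, mem_sortedIn.2 ?_⟩
    simp only [Function.iterate_one, rotate, Matrix.cons_val, Set.mem_Ioc]
    refine ⟨?_, ?_, ⟨?_, ?_⟩, ⟨?_, ?_⟩, ⟨?_, ?_⟩⟩ <;> linarith
  rcases h12.lt_or_eq with h12 | h12
  · refine ⟨2, mem_sortedIn.2 ?_⟩
    simp only [Function.iterate_succ_apply', Function.iterate_zero_apply, rotate,
      Matrix.cons_val, Set.mem_Ioc]
    refine ⟨?_, ?_, ⟨?_, ?_⟩, ⟨?_, ?_⟩, ⟨?_, ?_⟩⟩ <;> linarith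
  · refine ⟨3, mem_sortedIn.2 ?_⟩
    simp only [Function.iterate_succ_apply', Function.iterate_zero_apply, rotate,
      Matrix.cons_val, Set.mem_Ioc]
    refine ⟨?_, ?_, ⟨?_, ?_⟩, ⟨?_, ?_⟩, ⟨?_, ?_⟩⟩ <;> linarith

theorem ofAngles_injOn_sortedIn_Ioc : Set.InjOn ofAngles (sortedIn (Set.Ioc (-π) π)) := by
  intro y hy y' hy' h
  obtain ⟨σ, hσ⟩ := Quotient.exact h
  have hperm : y ∘ σ = y' := funext fun i =>
    Circle.exp_injOn_Ioc (by linarith) (hy.2 (σ i) trivial) (hy'.2 i trivial) (congrFun hσ i)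
  have := Tuple.unique_monotone (f := y) (σ := 1) (τ := σ) hy.1 (hperm ▸ hy'.1)
  rwa [Equiv.Perm.coe_one, Function.comp_id, hperm] at this

theorem ofAngles_straighten_rotate_iterate (t : ℝ) (x : Fin 3 → ℝ) (j : ℕ) :
    ofAngles (straighten t (rotate^[j] x)) = ofAngles (straighten t x) := by
  rw [straighten_rotate_iterate, ofAngles_rotate_iterate]

theorem ofAngles_straighten_eq {x x' : Fin 3 → ℝ} (hx : x ∈ sortedIn (Set.Icc (-π) π))
    (hx' : x' ∈ sortedIn (Set.Icc (-π) π)) (h : ofAngles x = ofAngles x') (t : ℝ) :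
    ofAngles (straighten t x) = ofAngles (straighten t x') := by
  obtain ⟨j, hj⟩ := exists_rotate_iterate_mem_sortedIn_Ioc hx
  obtain ⟨j', hj'⟩ := exists_rotate_iterate_mem_sortedIn_Ioc hx'
  have hrot : rotate^[j] x = rotate^[j'] x' :=
    ofAngles_injOn_sortedIn_Ioc hj hj' (by rw [ofAngles_rotate_iterate, ofAngles_rotate_iterate, h])
  rw [← ofAngles_straighten_rotate_iterate t x j, hrot, ofAngles_straighten_rotate_iterate]

def ofSortedAngles : C(sortedIn (Set.Icc (-π) π), Sym3Circle) :=
  ⟨fun x => ofAngles x, continuous_ofAngles.comp continuous_subtype_val⟩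

theorem ofSortedAngles_apply (x : sortedIn (Set.Icc (-π) π)) : ofSortedAngles x = ofAngles x :=
  rfl

theorem surjective_ofSortedAngles : Function.Surjective ofSortedAngles := by
  rintro ⟨v⟩
  obtain ⟨x, hx, hxv⟩ := exists_ofAngles_mem_sortedIn_Ioc v
  exact ⟨⟨x, hx.1, fun i _ => Set.Ioc_subset_Icc_self (hx.2 i trivial)⟩, hxv⟩

theorem isQuotientMap_prodMap_ofSortedAngles :
    IsQuotientMap ((ContinuousMap.id unitInterval).prodMap ofSortedAngles) := by
  have : CompactSpace (sortedIn (Set.Icc (-π) π)) :=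
    isCompact_iff_compactSpace.1 (isCompact_sortedIn_Icc _ _)
  have hcont := ((ContinuousMap.id unitInterval).prodMap ofSortedAngles).continuous
  exact hcont.isClosedMap.isQuotientMap hcont
    (Function.surjective_id.prodMap surjective_ofSortedAngles)

def straightenLift : C(unitInterval × sortedIn (Set.Icc (-π) π), Sym3Circle) :=
  ⟨fun p => ofAngles (straighten p.1 p.2), continuous_ofAngles.comp (continuous_straighten.comp
    ((continuous_subtype_val.comp continuous_fst).prodMk
      (continuous_subtype_val.comp continuous_snd)))⟩

theorem factorsThrough_straightenLift : Function.FactorsThrough straightenLift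
    ((ContinuousMap.id unitInterval).prodMap ofSortedAngles) := fun p p' h => by
  have ht : p.1 = p'.1 := (Prod.ext_iff.1 h).1
  show ofAngles (straighten p.1 p.2) = ofAngles (straighten p'.1 p'.2)
  rw [ht]
  exact ofAngles_straighten_eq p.2.2 p'.2.2 (Prod.ext_iff.1 h).2 _

def straightenMap : C(unitInterval × Sym3Circle, Sym3Circle) :=
  isQuotientMap_prodMap_ofSortedAngles.lift straightenLift factorsThrough_straightenLift

theorem straightenMap_ofAngles (t : unitInterval) (x : sortedIn (Set.Icc (-π) π)) :
    straightenMap (t, ofAngles x) = ofAngles (straighten t x) :=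
  DFunLike.congr_fun (isQuotientMap_prodMap_ofSortedAngles.lift_comp straightenLift
    factorsThrough_straightenLift) (t, x)

def prod : C(Sym3Circle, Circle) := permSetoid.prod Circle

theorem prod_ofAngles (x : Fin 3 → ℝ) : prod (ofAngles x) = Circle.exp (3 * mean x) := by
  show ∏ i, Circle.exp (x i) = _
  rw [Fin.prod_univ_three, ← Circle.exp_add, ← Circle.exp_add, mean]
  ring_nf

theorem periodic_ofAngles_equispaced :
    Function.Periodic (fun m => ofAngles (equispaced m)) (2 * π / 3) :=
  fun m => by simp only [equispaced_add, ofAngles_rotate]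

def cubeRootsLift : C(ℝ, Sym3Circle) :=
  ⟨fun θ => ofAngles (equispaced (θ / 3)),
    continuous_ofAngles.comp (continuous_equispaced.comp (continuous_id.div_const 3))⟩

theorem factorsThrough_cubeRootsLift : Function.FactorsThrough cubeRootsLift Circle.exp :=
  fun a b h => by
    obtain ⟨k, hk⟩ := Circle.exp_eq_exp.1 h
    have : a / 3 = b / 3 + k * (2 * π / 3) := by rw [hk]; ring
    show ofAngles (equispaced (a / 3)) = ofAngles (equispaced (b / 3))
    rw [this]
    exact periodic_ofAngles_equispaced.int_mul k _

def cubeRoots : C(Circle, Sym3Circle) :=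
  (Circle.isCoveringMap_exp.isQuotientMap Circle.exp_surjective).lift cubeRootsLift
    factorsThrough_cubeRootsLift

theorem cubeRoots_exp (θ : ℝ) : cubeRoots (Circle.exp θ) = ofAngles (equispaced (θ / 3)) :=
  DFunLike.congr_fun ((Circle.isCoveringMap_exp.isQuotientMap Circle.exp_surjective).lift_comp
    cubeRootsLift factorsThrough_cubeRootsLift) θ

theorem prod_comp_cubeRoots : prod.comp cubeRoots = ContinuousMap.id Circle := by
  refine ContinuousMap.ext fun w => ?_
  obtain ⟨θ, rfl⟩ := Circle.exp_surjective w
  simp only [ContinuousMap.comp_apply, ContinuousMap.id_apply, cubeRoots_exp, prod_ofAngles,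
    mean_equispaced, mul_div_cancel₀ _ (three_ne_zero' ℝ)]

def straightenHomotopy :
    ContinuousMap.Homotopy (ContinuousMap.id Sym3Circle) (cubeRoots.comp prod) where
  toFun := straightenMap
  map_zero_left q := by
    obtain ⟨x, rfl⟩ := surjective_ofSortedAngles q
    simp only [ofSortedAngles_apply, straightenMap_ofAngles, Set.Icc.coe_zero, straighten_zero,
      ContinuousMap.id_apply]
  map_one_left q := by
    obtain ⟨x, rfl⟩ := surjective_ofSortedAngles q
    simp only [ofSortedAngles_apply, straightenMap_ofAngles, Set.Icc.coe_one, straighten_one,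
      ContinuousMap.comp_apply, prod_ofAngles, cubeRoots_exp,
      mul_div_cancel_left₀ _ (three_ne_zero' ℝ)]

end

end Sym3Circle

/-- The third symmetric power of the circle is homotopy equivalent to S¹. -/
theorem sym3_circle_homotopyEquiv_circle :
    Nonempty (ContinuousMap.HomotopyEquiv Sym3Circle Circle) :=
  ⟨⟨Sym3Circle.prod, Sym3Circle.cubeRoots, ⟨Sym3Circle.straightenHomotopy.symm⟩,
    Sym3Circle.prod_comp_cubeRoots ▸ .refl _⟩⟩
end

section
/- Every trinitary algebra F of class \overline{TD}_k(M) with support points A₁,...,A_r of multiplicities m₁,...,m_r (m₁+⋯+m_r = 3k) contains all constant functions and contains the ideal M_{A₁}^{m₁} ∩ ⋯ ∩ M_{A_r}^{m_r} of functions vanishing at each Aᵢ to order mᵢ. -/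
/- ### Auxiliary lemmas -/

lemma aux_iter_const (c : ℝ) (n : ℕ) :
    iteratedDeriv n (fun _ : ℝ => c) = fun _ => if n = 0 then c else 0 := by
  induction n with
  | zero => simp [iteratedDeriv_zero]
  | succ n ih =>
    rw [iteratedDeriv_succ, ih]
    funext x
    rcases Nat.eq_zero_or_pos n with h | h
    · subst h; simp
    · simp [Nat.pos_iff_ne_zero.mp h]

lemma aux_param (n : ℕ) : ∀ φ : ℝ → ℝ → ℝ, ContDiff ℝ (⊤ : ℕ∞) (Function.uncurry φ) →
    ContDiff ℝ n (fun x => ∫ t in (0:ℝ)..1, φ x t) := by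
  induction n with
  | zero =>
    intro φ hφ
    exact contDiff_zero.mpr
      (intervalIntegral.continuous_parametric_intervalIntegral_of_continuous' hφ.continuous 0 1)
  | succ n ih =>
    intro φ hφ
    set ψ : ℝ → ℝ → ℝ := fun x t => fderiv ℝ (Function.uncurry φ) (x, t) (1, 0) with hψ
    have hψs : ContDiff ℝ (⊤ : ℕ∞) (Function.uncurry ψ) := by
      have h1 := hφ.fderiv_right (m := ((⊤ : ℕ∞) : WithTop ℕ∞)) (le_of_eq rfl)
      exact (h1.clm_apply contDiff_const :
        ContDiff ℝ (⊤ : ℕ∞) (fun p : ℝ × ℝ => fderiv ℝ (Function.uncurry φ) p (1, 0)))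
    have hder : ∀ x t, HasDerivAt (fun y => φ y t) (ψ x t) x := by
      intro x t
      have h1 : HasFDerivAt (Function.uncurry φ) (fderiv ℝ (Function.uncurry φ) (x, t)) (x, t) :=
        (hφ.differentiable (by simp) (x, t)).hasFDerivAt
      exact h1.comp_hasDerivAt x ((hasDerivAt_id x).prodMk (hasDerivAt_const x t))
    have hD : ∀ x₀, HasDerivAt (fun x => ∫ t in (0:ℝ)..1, φ x t)
        (∫ t in (0:ℝ)..1, ψ x₀ t) x₀ := by
      intro x₀
      obtain ⟨C, hC⟩ := ((isCompact_closedBall x₀ 1).prod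
        (isCompact_Icc : IsCompact (Set.Icc (0:ℝ) 1))).exists_bound_of_continuousOn
        hψs.continuous.continuousOn
      refine (intervalIntegral.hasDerivAt_integral_of_dominated_loc_of_deriv_le
        (bound := fun _ => C) (Metric.ball_mem_nhds x₀ one_pos) ?_ ?_ ?_ ?_
        intervalIntegrable_const ?_).2
      · exact Filter.Eventually.of_forall fun x =>
          (show Continuous (φ x) from
            hφ.continuous.comp (continuous_const.prodMk continuous_id)).aestronglyMeasurable
      · exact (show Continuous (φ x₀) from
          hφ.continuous.comp (continuous_const.prodMk continuous_id)).intervalIntegrable _ _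
      · exact (show Continuous (ψ x₀) from
          hψs.continuous.comp (continuous_const.prodMk continuous_id)).aestronglyMeasurable
      · exact Filter.Eventually.of_forall fun t ht x hx =>
          hC (x, t) ⟨Metric.ball_subset_closedBall hx,
            Set.Ioc_subset_Icc_self (by rwa [Set.uIoc_of_le zero_le_one] at ht)⟩
      · exact Filter.Eventually.of_forall fun t _ x _ => hder x t
    have hderiv : deriv (fun x => ∫ t in (0:ℝ)..1, φ x t) = fun x => ∫ t in (0:ℝ)..1, ψ x t :=
      funext fun x => (hD x).deriv
    rw [Nat.cast_succ, contDiff_succ_iff_deriv]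
    refine ⟨fun x => (hD x).differentiableAt, fun h => absurd h (by simp), ?_⟩
    rw [hderiv]
    exact ih ψ hψs

lemma aux_dslope_smooth (f : ℝ → ℝ) (a : ℝ) (hf : ContDiff ℝ (⊤ : ℕ∞) f) :
    ContDiff ℝ (⊤ : ℕ∞) (dslope f a) := by
  have hd : ContDiff ℝ (⊤ : ℕ∞) (deriv f) := (contDiff_infty_iff_deriv.mp hf).2
  have hφ : ContDiff ℝ (⊤ : ℕ∞) (Function.uncurry (fun x t : ℝ => deriv f (a + t • (x - a)))) :=
    hd.comp (contDiff_const.add (contDiff_snd.smul (contDiff_fst.sub contDiff_const)))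
  have heq : dslope f a = fun x => ∫ t in (0:ℝ)..1, deriv f (a + t • (x - a)) := by
    funext x
    by_cases hx : x = a
    · subst hx; simp [dslope_same]
    · have h1 := intervalIntegral.integral_unitInterval_deriv_eq_sub (𝕜 := ℝ) (f := f) (f' := deriv f)
        (z₀ := a) (z₁ := x - a)
        ((hd.continuous.comp (continuous_const.add (continuous_id.smul continuous_const))).continuousOn)
        (fun t _ => (hf.differentiable (by simp) _).hasDerivAt)
      have h2 := sub_smul_dslope f a x
      rw [add_sub_cancel] at h1
      rw [← h1, smul_eq_mul, smul_eq_mul] at h2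
      exact mul_left_cancel₀ (sub_ne_zero.2 hx) h2
  rw [heq]
  exact contDiff_infty.mpr fun n => aux_param n _ hφ

/-- analytic Hadamard division by a root -/
lemma aux_dslope_analytic (f : ℝ → ℝ) (a : ℝ) (hf : ContDiff ℝ (⊤ : ℕ∞) f) (h0 : f a = 0) :
    ContDiff ℝ (⊤ : ℕ∞) (dslope f a) ∧ ∀ x, f x = (x - a) * dslope f a x := by
  constructor
  · exact aux_dslope_smooth f a hf
  · intro x
    have h := sub_smul_dslope f a x
    rw [smul_eq_mul, h0, sub_zero] at h
    exact h.symm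

/-- Leibniz rule for multiplication by a linear factor -/
lemma aux_leibniz (g : ℝ → ℝ) (hg : ContDiff ℝ (⊤ : ℕ∞) g) (a : ℝ) :
    ∀ j : ℕ, iteratedDeriv (j + 1) (fun y => (y - a) * g y) =
      fun x => (j + 1 : ℝ) * iteratedDeriv j g x + (x - a) * iteratedDeriv (j + 1) g x := by
  have hdiff : ∀ n : ℕ, Differentiable ℝ (iteratedDeriv n g) := fun n =>
    hg.differentiable_iteratedDeriv n (by exact_mod_cast ENat.coe_lt_top n)
  have hD : ∀ (n : ℕ) (x : ℝ),
      HasDerivAt (iteratedDeriv n g) (iteratedDeriv (n + 1) g x) x := by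
    intro n x
    rw [iteratedDeriv_succ]
    exact (hdiff n x).hasDerivAt
  intro j
  induction j with
  | zero =>
    funext x
    rw [iteratedDeriv_one]
    have h1 : HasDerivAt (fun y => (y - a) * g y)
        (1 * g x + (x - a) * deriv g x) x :=
      ((hasDerivAt_id x).sub_const a).mul ((hg.differentiable (by simp)) x).hasDerivAt
    rw [h1.deriv]
    simp [iteratedDeriv_zero, iteratedDeriv_one]
  | succ j ih =>
    funext x
    rw [iteratedDeriv_succ, ih]
    have h1 : HasDerivAt
        (fun x => ((j : ℝ) + 1) * iteratedDeriv j g x + (x - a) * iteratedDeriv (j + 1) g x)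
        (((j : ℝ) + 1) * iteratedDeriv (j + 1) g x +
          (1 * iteratedDeriv (j + 1) g x + (x - a) * iteratedDeriv (j + 2) g x)) x :=
      ((hD j x).const_mul _).add
        (((hasDerivAt_id x).sub_const a).mul (hD (j + 1) x))
    rw [h1.deriv]
    push_cast
    ring

/-- multi-point Hadamard factorization -/
lemma aux_factor : ∀ (N : ℕ) {r : ℕ} (A : Fin r → ℝ), Function.Injective A →
    ∀ (m : Fin r → ℕ), (∑ i, m i = N) → ∀ (f : ℝ → ℝ), ContDiff ℝ (⊤ : ℕ∞) f →
    (∀ i, ∀ j < m i, iteratedDeriv j f (A i) = 0) →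
    ∃ g : ℝ → ℝ, ContDiff ℝ (⊤ : ℕ∞) g ∧ ∀ x, f x = (∏ i, (x - A i) ^ m i) * g x := by
  intro N
  induction N with
  | zero =>
    intro r A hA m hm f hf hvan
    have hz : ∀ i, m i = 0 := by
      intro i
      have := Finset.sum_eq_zero_iff.mp hm i (Finset.mem_univ i)
      exact this
    exact ⟨f, hf, fun x => by simp [hz]⟩
  | succ N IH =>
    intro r A hA m hm f hf hvan
    have hex : ∃ i₀, 0 < m i₀ := by
      by_contra h
      push_neg at h
      simp only [Nat.le_zero] at h
      rw [Finset.sum_congr rfl (fun i _ => h i)] at hm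
      simp at hm
    obtain ⟨i₀, hi₀⟩ := hex
    have hf0 : f (A i₀) = 0 := by
      have := hvan i₀ 0 hi₀
      simpa [iteratedDeriv_zero] using this
    obtain ⟨hgd, hgid⟩ := aux_dslope_analytic f (A i₀) hf hf0
    set g := dslope f (A i₀) with hgdef
    have hfun : f = fun y => (y - A i₀) * g y := funext hgid
    have hL := aux_leibniz g hgd (A i₀)
    set m' := Function.update m i₀ (m i₀ - 1) with hm'def
    have hvg : ∀ i, ∀ j < m' i, iteratedDeriv j g (A i) = 0 := by
      intro i
      by_cases hii : i = i₀
      · subst hii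
        intro j hj
        rw [hm'def, Function.update_self] at hj
        have h2 : ((j : ℝ) + 1) * iteratedDeriv j g (A i)
            + (A i - A i) * iteratedDeriv (j + 1) g (A i) = 0 := by
          have h := hvan i (j + 1) (by omega)
          rw [hfun] at h
          rw [hL j] at h
          exact h
        rw [sub_self, zero_mul, add_zero] at h2
        have hne : ((j : ℝ) + 1) ≠ 0 := by positivity
        exact (mul_eq_zero.mp h2).resolve_left hne
      · have hAne : A i - A i₀ ≠ 0 := sub_ne_zero.2 fun h => hii (hA h)
        have key : ∀ j, j < m i → iteratedDeriv j g (A i) = 0 := by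
          intro j
          induction j with
          | zero =>
            intro hj
            have h2 : f (A i) = 0 := by
              have := hvan i 0 hj
              simpa [iteratedDeriv_zero] using this
            rw [hgid (A i)] at h2
            simpa [iteratedDeriv_zero] using (mul_eq_zero.mp h2).resolve_left hAne
          | succ j ihj =>
            intro hj
            have h2 : ((j : ℝ) + 1) * iteratedDeriv j g (A i)
                + (A i - A i₀) * iteratedDeriv (j + 1) g (A i) = 0 := by
              have h := hvan i (j + 1) hj
              rw [hfun] at h
              rw [hL j] at h
              exact h
            rw [ihj (by omega), mul_zero, zero_add] at h2
            exact (mul_eq_zero.mp h2).resolve_left hAne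
        intro j hj
        rw [hm'def, Function.update_of_ne hii] at hj
        exact key j hj
    have hsum' : ∑ i, m' i = N := by
      have h1 : ∑ i, m' i = (m i₀ - 1) + ∑ i ∈ Finset.univ \ {i₀}, m i := by
        rw [hm'def, Finset.sum_update_of_mem (Finset.mem_univ i₀)]
      have h2 : ∑ i, m i = m i₀ + ∑ i ∈ Finset.univ \ {i₀}, m i := by
        rw [Finset.sdiff_singleton_eq_erase, Finset.add_sum_erase _ _ (Finset.mem_univ i₀)]
      omega
    obtain ⟨h, hh, hhid⟩ := IH A hA m' hsum' g hgd hvg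
    refine ⟨h, hh, fun x => ?_⟩
    rw [hgid x, hhid x]
    have hkey : (x - A i₀) * ∏ i, (x - A i) ^ m' i = ∏ i, (x - A i) ^ m i := by
      rw [← Finset.mul_prod_erase Finset.univ (fun i => (x - A i) ^ m' i) (Finset.mem_univ i₀),
        ← Finset.mul_prod_erase Finset.univ (fun i => (x - A i) ^ m i) (Finset.mem_univ i₀)]
      have e1 : ∏ i ∈ Finset.univ.erase i₀, (x - A i) ^ m' i
          = ∏ i ∈ Finset.univ.erase i₀, (x - A i) ^ m i :=
        Finset.prod_congr rfl (fun i hi => by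
          rw [hm'def, Function.update_of_ne (Finset.ne_of_mem_erase hi)])
      rw [e1, ← mul_assoc, hm'def, Function.update_self, ← pow_succ']
      congr 2
      omega
    rw [← hkey]
    ring

/-- finite products of linear factors are analytic -/
lemma aux_prod_contDiff {ι : Type*} (S : Finset ι) (w : ι → ℝ) :
    ContDiff ℝ (⊤ : ℕ∞) (fun y => ∏ p ∈ S, (y - w p)) := by
  classical
  induction S using Finset.induction with
  | empty => simpa using contDiff_const (c := (1 : ℝ))
  | insert _ _ hnotmem ih =>
    simp only [Finset.prod_insert hnotmem]
    exact (contDiff_id.sub contDiff_const).mul ih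

lemma aux_iter_sum {ι : Type*} [DecidableEq ι] (S : Finset ι) (c : ι → ℝ) (u : ι → ℝ → ℝ)
    (hu : ∀ i, ContDiff ℝ (⊤ : ℕ∞) (u i)) (n : ℕ) (x : ℝ) :
    iteratedDeriv n (fun y => ∑ i ∈ S, c i * u i y) x
      = ∑ i ∈ S, c i * iteratedDeriv n (u i) x := by
  induction S using Finset.induction with
  | empty =>
    simp [aux_iter_const (0 : ℝ) n]
  | @insert a S hnotmem ih =>
    have hrest : ContDiff ℝ (⊤ : ℕ∞) (fun y => ∑ i ∈ S, c i * u i y) := by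
      apply ContDiff.sum
      intro i _
      exact (contDiff_const.mul (hu i))
    have hadd : iteratedDeriv n (fun y => c a * u a y + ∑ i ∈ S, c i * u i y) x
        = iteratedDeriv n (fun y => c a * u a y) x
          + iteratedDeriv n (fun y => ∑ i ∈ S, c i * u i y) x := by
      rw [← iteratedDerivWithin_univ, ← iteratedDerivWithin_univ, ← iteratedDerivWithin_univ]
      exact iteratedDerivWithin_add (Set.mem_univ x) uniqueDiffOn_univ
        ((contDiff_const.mul (hu a)).of_le (by exact_mod_cast le_top)).contDiffWithinAt
        (hrest.of_le (by exact_mod_cast le_top)).contDiffWithinAt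
    have hcm : iteratedDeriv n (fun y => c a * u a y) x = c a * iteratedDeriv n (u a) x := by
      rw [← iteratedDerivWithin_univ, ← iteratedDerivWithin_univ]
      exact iteratedDerivWithin_const_mul (Set.mem_univ x) uniqueDiffOn_univ _
        ((hu a).of_le (by exact_mod_cast le_top)).contDiffWithinAt
    simp only [Finset.sum_insert hnotmem]
    rw [show (fun y => c a * u a y + ∑ i ∈ S, c i * u i y)
        = fun y => c a * u a y + ∑ i ∈ S, c i * u i y from rfl] at hadd
    rw [hadd, hcm, ih]

/-- A trinitary algebra of class `\overline{TD}_k` (here on M = ℝ), defined as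
the limit of the algebras of k-triangular diagrams along a germ of an analytic
(e.g. algebraic) parametric curve ν, contains all constant functions and the
ideal of functions vanishing to order mᵢ at each support point Aᵢ. -/
theorem trinitary_algebra_contains_constants_and_ideal
    (k r : ℕ) (ε : ℝ) (hε : 0 < ε)
    (ν : ℝ → (Fin k × Fin 3) → ℝ)
    -- the parametric curve is (real-)algebraic: each coordinate is analytic
    (hνalg : ∀ p : Fin k × Fin 3, ∀ t ∈ Set.Ico 0 ε,
      AnalyticAt ℝ (fun s => ν s p) t)
    -- for t > 0 the 3k points are pairwise distinct
    (hdistinct : ∀ t ∈ Set.Ioo 0 ε, Function.Injective (ν t))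
    -- the support A₁, …, A_r with multiplicities m₁, …, m_r, m₁+⋯+m_r = 3k
    (A : Fin r → ℝ) (hA : Function.Injective A) (m : Fin r → ℕ)
    (hsupp : ∀ p, ∃ i, ν 0 p = A i)
    (hmult : ∀ i,
      (Finset.univ.filter (fun p : Fin k × Fin 3 => ν 0 p = A i)).card = m i)
    (hsum : ∑ i, m i = 3 * k)
    -- the limit algebra F₀
    (F₀ : Set (ℝ → ℝ))
    (hF₀ : F₀ = {f | ContDiff ℝ (⊤ : ℕ∞) f ∧ ∃ F : ℝ → ℝ → ℝ, F 0 = f ∧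
      (∀ t ∈ Set.Ioo 0 ε, ContDiff ℝ (⊤ : ℕ∞) (F t) ∧
        ∀ p : Fin k, F t (ν t (p, 0)) = F t (ν t (p, 1)) ∧
                     F t (ν t (p, 0)) = F t (ν t (p, 2))) ∧
      -- the family t ↦ F t is continuous in the C^{3k} topology
      ∀ j ≤ 3 * k, ContinuousOn (fun q : ℝ × ℝ => iteratedDeriv j (F q.1) q.2)
        (Set.Ico 0 ε ×ˢ Set.univ)}) :
    (∀ c : ℝ, (fun _ => c) ∈ F₀) ∧
    (∀ f : ℝ → ℝ, ContDiff ℝ (⊤ : ℕ∞) f →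
      (∀ i, ∀ j < m i, iteratedDeriv j f (A i) = 0) → f ∈ F₀) := by
  classical
  subst hF₀
  constructor
  · -- constants
    intro c
    refine ⟨contDiff_const, fun _ _ => c, rfl, fun t _ => ⟨contDiff_const, fun p => ⟨rfl, rfl⟩⟩,
      fun j _ => ?_⟩
    have hc : (fun q : ℝ × ℝ => iteratedDeriv j ((fun _ _ => c) q.1) q.2)
        = fun _ : ℝ × ℝ => if j = 0 then c else 0 := by
      funext q
      show iteratedDeriv j (fun _ : ℝ => c) q.2 = _
      rw [aux_iter_const]
    rw [hc]
    exact continuousOn_const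
  · -- the ideal
    intro f hf hvan
    obtain ⟨g, hg, hgid⟩ := aux_factor (3 * k) A hA m hsum f hf hvan
    set P : Finset (Fin k × Fin 3) := Finset.univ with hP
    refine ⟨hf, fun t x => g x * ∏ p ∈ P, (x - ν t p), ?_, ?_, ?_⟩
    · -- F 0 = f
      funext x
      show g x * ∏ p ∈ P, (x - ν 0 p) = f x
      have hσ : ∀ p : Fin k × Fin 3, ν 0 p = A (hsupp p).choose := fun p => (hsupp p).choose_spec
      have hprod : ∏ p ∈ P, (x - ν 0 p) = ∏ i, (x - A i) ^ m i := by
        rw [← Finset.prod_fiberwise_of_maps_to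
          (g := fun p => (hsupp p).choose) (t := Finset.univ)
          (fun p _ => Finset.mem_univ _) (fun p => x - ν 0 p)]
        apply Finset.prod_congr rfl
        intro i _
        have hfe : Finset.filter (fun p => (hsupp p).choose = i) P
            = Finset.filter (fun p : Fin k × Fin 3 => ν 0 p = A i) Finset.univ := by
          apply Finset.filter_congr
          intro p _
          constructor
          · intro h; rw [hσ p, h]
          · intro h; exact hA ((hσ p).symm.trans h)
        calc ∏ p ∈ Finset.filter (fun p => (hsupp p).choose = i) P, (x - ν 0 p)
            = ∏ p ∈ Finset.filter (fun p => (hsupp p).choose = i) P, (x - A i) := by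
              apply Finset.prod_congr rfl
              intro p hp
              rw [hσ p, (Finset.mem_filter.mp hp).2]
          _ = (x - A i) ^ m i := by
              rw [Finset.prod_const, hfe, hmult i]
      rw [hprod, hgid x]
      ring
    · -- properties for t > 0
      intro t _
      refine ⟨hg.mul (aux_prod_contDiff P (ν t)), fun p => ?_⟩
      have hz : ∀ q : Fin k × Fin 3, (∏ p' ∈ P, (ν t q - ν t p')) = 0 := fun q =>
        Finset.prod_eq_zero (Finset.mem_univ q) (sub_self _)
      constructor <;> simp [hz]
    · -- continuity of the family
      intro j _
      have hkey : ∀ t x : ℝ,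
          iteratedDeriv j (fun y => g y * ∏ p ∈ P, (y - ν t p)) x
            = ∑ T ∈ P.powerset, (∏ p ∈ P \ T, (-ν t p))
                * iteratedDeriv j (fun y => g y * y ^ T.card) x := by
        intro t x
        have hfe : (fun y => g y * ∏ p ∈ P, (y - ν t p))
            = fun y => ∑ T ∈ P.powerset,
                (∏ p ∈ P \ T, (-ν t p)) * (g y * y ^ T.card) := by
          funext y
          have h1 : ∏ p ∈ P, (y - ν t p) = ∏ p ∈ P, (y + (-ν t p)) := by
            apply Finset.prod_congr rfl; intro p _; ring
          rw [h1, Finset.prod_add, Finset.mul_sum]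
          apply Finset.sum_congr rfl
          intro T _
          rw [Finset.prod_const]
          ring
        rw [hfe]
        exact aux_iter_sum P.powerset _ _
          (fun T => hg.mul (contDiff_id.pow T.card)) j x
      have hrw : (fun q : ℝ × ℝ =>
          iteratedDeriv j ((fun t x => g x * ∏ p ∈ P, (x - ν t p)) q.1) q.2)
          = fun q : ℝ × ℝ => ∑ T ∈ P.powerset, (∏ p ∈ P \ T, (-ν q.1 p))
              * iteratedDeriv j (fun y => g y * y ^ T.card) q.2 :=
        funext fun q => hkey q.1 q.2
      rw [hrw]
      apply continuousOn_finset_sum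
      intro T _
      apply ContinuousOn.mul
      · apply continuousOn_finset_prod
        intro p _
        have : ContinuousOn (fun q : ℝ × ℝ => ν q.1 p) (Set.Ico 0 ε ×ˢ Set.univ) := by
          intro q hq
          exact (((hνalg p q.1 (Set.mem_prod.mp hq).1).continuousAt).comp
            continuousAt_fst).continuousWithinAt
        exact this.neg
      · exact ((ContDiff.continuous_iteratedDeriv j
          (hg.mul (contDiff_id.pow T.card)) (by exact_mod_cast le_top)).comp continuous_snd).continuousOn
end
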